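/- A semigroup coincides with each of its interassociates if and only if it is a rectangular band. In particular, if (S, ⊣) is a rectangular band (x ⊣ y ⊣ x = x for all x, y) and (S, ⊢) is an interassociate of (S, ⊣), then ⊢ = ⊣. -/

import Mathlib

/-!
If `S` is a rectangular band then `xyz = xz`, and an interassociate `∗` satisfies
`x ∗ y = (xyx) ∗ y = x (x ∗ y)` and likewise `x ∗ y = (x ∗ y) y`,
so `x ∗ y = x (x ∗ y) y = xy`.

Conversely, for every `a` the variant `x ∗ y = xay` is an interassociate, so a semigroup equal to
all its interassociates satisfies `xay = xy`. In such a semigroup an element `a ∉ S²` can be made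
idempotent without disturbing any of the laws, which gives an interassociate with `a ∗ a = a`;
hence `a = aa ∈ S²` after all. So `S = S²`, and every product is idempotent: `uvuv = uv`.
-/

structure IsInterassociate {S : Type*} (mul h : S → S → S) : Prop where
  assoc : ∀ x y z, h (h x y) z = h x (h y z)
  assoc_left : ∀ x y z, h (mul x y) z = mul x (h y z)
  assoc_right : ∀ x y z, mul (h x y) z = h x (mul y z)

def CoincidesWithInterassociates (S : Type*) [Mul S] : Prop :=
  ∀ h : S → S → S, IsInterassociate (· * ·) h → h = (· * ·)

section Semigroup

variable {S : Type*} [Semigroup S]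

theorem isInterassociate_mul_mul (a : S) : IsInterassociate (· * ·) (fun x y => x * a * y) where
  assoc _ _ _ := by simp only [mul_assoc]
  assoc_left _ _ _ := by simp only [mul_assoc]
  assoc_right _ _ _ := by simp only [mul_assoc]

theorem isInterassociate_update_mul_self [DecidableEq S]
    (collapse : ∀ x y z : S, x * y * z = x * z) {a : S} (ha : ∀ u v : S, u * v ≠ a) :
    IsInterassociate (· * ·) (fun x y => if x = a ∧ y = a then a else x * y) := by
  have collapse' (x y z : S) : x * (y * z) = x * z := by rw [← mul_assoc, collapse]
  refine ⟨fun x y z => ?_, fun x y z => ?_, fun x y z => ?_⟩ <;>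
    by_cases hx : x = a <;> by_cases hy : y = a <;> by_cases hz : z = a <;>
    simp [hx, hy, hz, ha, mul_assoc, collapse']

theorem CoincidesWithInterassociates.mul_mul_eq (H : CoincidesWithInterassociates S) (x a y : S) :
    x * a * y = x * y :=
  congrFun₂ (H _ (isInterassociate_mul_mul a)) x y

theorem CoincidesWithInterassociates.exists_mul_eq (H : CoincidesWithInterassociates S) (a : S) :
    ∃ u v : S, u * v = a := by
  classical
  by_contra! ha
  have h_eq := H _ (isInterassociate_update_mul_self H.mul_mul_eq ha)
  exact ha a a (by simpa using (congrFun₂ h_eq a a).symm)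

theorem CoincidesWithInterassociates.mul_self_eq (H : CoincidesWithInterassociates S) (a : S) :
    a * a = a := by
  obtain ⟨u, v, rfl⟩ := H.exists_mul_eq a
  have collapse := H.mul_mul_eq
  rw [collapse, ← mul_assoc, collapse]

theorem mul_mul_eq_of_rectangular (rect : ∀ x y : S, x * y * x = x) (x y z : S) :
    x * y * z = x * z := by
  calc x * y * z = x * z * x * y * z := by rw [rect]
    _ = x * (z * (x * y) * z) := by simp only [mul_assoc]
    _ = x * z := by rw [rect]

theorem IsInterassociate.eq_mul_of_rectangular (rect : ∀ x y : S, x * y * x = x)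
    {h : S → S → S} (hh : IsInterassociate (· * ·) h) : h = (· * ·) := by
  have collapse := mul_mul_eq_of_rectangular rect
  funext x y
  have hx : h x y = x * h x y := by
    conv_lhs => rw [← rect x y, hh.assoc_left, collapse]
  have hy : h x y = h x y * y := by
    conv_lhs => rw [← rect y y, mul_assoc, ← hh.assoc_right, ← mul_assoc, collapse]
  rw [hx, hy, ← mul_assoc, collapse]

end Semigroup

theorem coincides_with_interassociates_iff_rectangular_band {S : Type*}
    (d : S → S → S) (d_assoc : ∀ x y z, d (d x y) z = d x (d y z)) :
    (∀ h : S → S → S, (∀ x y z, h (h x y) z = h x (h y z)) →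
        (∀ x y z, h (d x y) z = d x (h y z)) →
        (∀ x y z, d (h x y) z = h x (d y z)) →
        h = d)
    ↔ (∀ x y, d (d x y) x = x) := by
  let _ : Semigroup S := { mul := d, mul_assoc := d_assoc }
  constructor
  · intro H x y
    have H' : CoincidesWithInterassociates S := fun h hh =>
      H h hh.assoc hh.assoc_left hh.assoc_right
    change x * y * x = x
    rw [H'.mul_mul_eq, H'.mul_self_eq]
  · intro rect h h_assoc h_left h_right
    exact IsInterassociate.eq_mul_of_rectangular rect ⟨h_assoc, h_left, h_right⟩
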